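/- arXiv:2306.08468 — 2 statements merged into one kernel-verified Lean document; each statement's English description precedes it below -/
import Mathlib

section
/- Let Z : [R₃, ∞) → (0, ∞) be differentiable with Z' ≥ 0, M : [R₃, ∞) → (0, ∞) continuous, p ≥ 2, and C > 0 with Z(R)^{2p/(2p-1)} ≤ C^{2p/(2p-1)}·Z'(R)·M(R) for all R ≥ R₃. Then Z(R) ≤ C^{2p} · (2p-1)^{2p-1} · (∫_R^∞ dr/M(r))^{-(2p-1)} whenever ∫_R^∞ dr/M(r) > 0. -/
open Set MeasureTheory

/-- p-version of the ODE comparison lemma: from `Z^{2p/(2p-1)} ≤ C^{2p/(2p-1)}·Z'·M`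
one gets `Z(R) ≤ C^{2p}·(2p-1)^{2p-1}·(∫_R^∞ dr/M(r))^{-(2p-1)}` whenever the
integral is positive. -/
theorem decay_estimate_p (Z M : ℝ → ℝ) (C R₃ p : ℝ) (hC : 0 < C) (hp : 2 ≤ p)
    (hZpos : ∀ R, R₃ ≤ R → 0 < Z R)
    (hZdiff : ∀ R, R₃ ≤ R → DifferentiableAt ℝ Z R)
    (hZ' : ∀ R, R₃ ≤ R → 0 ≤ deriv Z R)
    (hMcont : ContinuousOn M (Set.Ici R₃))
    (hMpos : ∀ R, R₃ ≤ R → 0 < M R)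
    (hineq : ∀ R, R₃ ≤ R →
      Z R ^ (2 * p / (2 * p - 1)) ≤ C ^ (2 * p / (2 * p - 1)) * deriv Z R * M R) :
    ∀ R, R₃ ≤ R → 0 < (∫ r in Set.Ioi R, 1 / M r) →
      Z R ≤ C ^ (2 * p) * (2 * p - 1) ^ (2 * p - 1) *
        (∫ r in Set.Ioi R, 1 / M r) ^ (-(2 * p - 1)) := by
  intro R hR hI
  have hp1 : (0:ℝ) < 2 * p - 1 := by linarith
  set s : ℝ := (2 * p - 1)⁻¹ with hs
  have hspos : 0 < s := inv_pos.mpr hp1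
  set q : ℝ := 2 * p / (2 * p - 1) with hqdef
  have hCq : 0 < C ^ q := Real.rpow_pos_of_pos hC q
  set c : ℝ := s / C ^ q with hcdef
  have hcpos : 0 < c := div_pos hspos hCq
  have hq1 : -s - 1 = -q := by
    rw [hs, hqdef]; field_simp; ring
  -- 1/M continuous on Ici R₃
  have hM1 : ContinuousOn (fun r => 1 / M r) (Ici R₃) :=
    continuousOn_const.div hMcont fun x hx => (hMpos x hx).ne'
  have hM1at : ∀ x, R₃ < x → ContinuousAt (fun r => 1 / M r) x := fun x hx =>
    (hM1 x hx.le).continuousAt (Ici_mem_nhds hx)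
  have hInt : IntegrableOn (fun r => 1 / M r) (Ioi R) := by
    by_contra h
    rw [MeasureTheory.integral_undef h] at hI
    exact lt_irrefl 0 hI
  set W : ℝ → ℝ := fun x => Z x ^ (-s) with hWdef
  have hWpos : ∀ x, R₃ ≤ x → 0 < W x := fun x hx => Real.rpow_pos_of_pos (hZpos x hx) _
  -- key pointwise bound via antitonicity
  have key : ∀ b, R ≤ b → c * ∫ t in R..b, 1 / M t ≤ W R := by
    intro b hb
    set F : ℝ → ℝ := fun x => ∫ t in R..x, 1 / M t with hFdef
    set G : ℝ → ℝ := fun x => W x + c * F x with hGdef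
    have hsub : Icc R b ⊆ Ici R₃ := fun x hx => le_trans hR hx.1
    have hFInt : IntegrableOn (fun t => 1 / M t) (uIcc R b) := by
      rw [uIcc_of_le hb]
      exact (hM1.mono hsub).integrableOn_Icc
    have hderivG : ∀ x ∈ Ioo R b,
        HasDerivAt G (deriv Z x * -s * Z x ^ (-s - 1) + c * (1 / M x)) x := by
      intro x hx
      have hx3 : R₃ < x := lt_of_le_of_lt hR hx.1
      have hWd : HasDerivAt W (deriv Z x * -s * Z x ^ (-s - 1)) x :=
        ((hZdiff x hx3.le).hasDerivAt).rpow_const (Or.inl (hZpos x hx3.le).ne')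
      have hib : IntervalIntegrable (fun t => 1 / M t) volume R x := by
        apply ContinuousOn.intervalIntegrable
        apply hM1.mono
        rw [uIcc_of_le hx.1.le]
        exact fun y hy => le_trans hR hy.1
      have hmeas : StronglyMeasurableAtFilter (fun t => 1 / M t) (nhds x) volume :=
        ContinuousAt.stronglyMeasurableAtFilter isOpen_Ioi
          (fun y hy => hM1at y hy) x hx3
      have hFd : HasDerivAt F (1 / M x) x :=
        intervalIntegral.integral_hasDerivAt_right hib hmeas (hM1at x hx3)
      exact hWd.add (hFd.const_mul c)
    have hanti : AntitoneOn G (Icc R b) := by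
      apply antitoneOn_of_deriv_nonpos (convex_Icc R b)
      · apply ContinuousOn.add
        · intro x hx
          exact (((hZdiff x (hsub hx)).continuousAt).rpow_const
            (Or.inl (hZpos x (hsub hx)).ne')).continuousWithinAt
        · have := intervalIntegral.continuousOn_primitive_interval hFInt
          rw [uIcc_of_le hb] at this
          exact continuousOn_const.mul this
      · rw [interior_Icc]
        exact fun x hx => ((hderivG x hx).differentiableAt).differentiableWithinAt
      · rw [interior_Icc]
        intro x hx
        rw [(hderivG x hx).deriv]
        have hx3 : R₃ ≤ x := le_trans hR hx.1.le
        have hMx : 0 < M x := hMpos x hx3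
        have hzq : 0 < Z x ^ q := Real.rpow_pos_of_pos (hZpos x hx3) q
        have h1 : Z x ^ q ≤ C ^ q * deriv Z x * M x := hineq x hx3
        have h2 : c / M x ≤ s * deriv Z x / Z x ^ q := by
          rw [div_le_div_iff₀ hMx hzq]
          calc c * Z x ^ q ≤ c * (C ^ q * deriv Z x * M x) :=
                mul_le_mul_of_nonneg_left h1 hcpos.le
            _ = s * deriv Z x * M x := by
                rw [hcdef]; field_simp
        rw [hq1, Real.rpow_neg (hZpos x hx3).le]
        have h3 : s * deriv Z x / Z x ^ q = s * (Z x ^ q)⁻¹ * deriv Z x := by ring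
        rw [h3] at h2
        have h4 : deriv Z x * -s * (Z x ^ q)⁻¹ + c * (1 / M x)
            = c / M x - s * (Z x ^ q)⁻¹ * deriv Z x := by ring
        rw [h4]
        linarith
    have hGle : G b ≤ G R := hanti (left_mem_Icc.mpr hb) (right_mem_Icc.mpr hb) hb
    have hFR : F R = 0 := intervalIntegral.integral_same
    have hWb : 0 < W b := hWpos b (le_trans hR hb)
    have : W b + c * F b ≤ W R + c * 0 := by
      rw [hGdef] at hGle; simpa [hFR] using hGle
    linarith
  -- pass to the limit
  have hten : Filter.Tendsto (fun b => c * ∫ t in R..b, 1 / M t) Filter.atTop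
      (nhds (c * ∫ r in Ioi R, 1 / M r)) :=
    (MeasureTheory.intervalIntegral_tendsto_integral_Ioi R hInt Filter.tendsto_id).const_mul c
  have hlim : c * (∫ r in Ioi R, 1 / M r) ≤ W R :=
    le_of_tendsto hten (Filter.eventually_atTop.mpr ⟨R, fun b hb => key b hb⟩)
  set I : ℝ := ∫ r in Ioi R, 1 / M r with hIdef
  have hcI : 0 < c * I := mul_pos hcpos hI
  have hstep := Real.rpow_le_rpow_of_nonpos hcI hlim (by linarith : -(2 * p - 1) ≤ 0)
  -- LHS simplification
  have hL : (Z R ^ (-s)) ^ (-(2 * p - 1)) = Z R := by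
    rw [← Real.rpow_mul (hZpos R hR).le]
    have : -s * -(2 * p - 1) = 1 := by
      rw [hs]; field_simp
    rw [this, Real.rpow_one]
  -- RHS simplification
  have hR' : (c * I) ^ (-(2 * p - 1)) =
      C ^ (2 * p) * (2 * p - 1) ^ (2 * p - 1) * I ^ (-(2 * p - 1)) := by
    have hqe : q * -(2 * p - 1) = -(2 * p) := by
      rw [hqdef]; field_simp
    rw [Real.mul_rpow hcpos.le hI.le, hcdef,
      Real.div_rpow hspos.le hCq.le, hs,
      Real.inv_rpow hp1.le, Real.rpow_neg hp1.le,
      ← Real.rpow_mul hC.le, hqe, Real.rpow_neg hC.le, inv_inv, div_inv_eq_mul]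
    ring
  rw [hWdef] at hstep
  rw [hL, hR'] at hstep
  exact hstep
end

section
/- Let g : (0, ∞) → (0, ∞) be continuous and suppose there exist constants C, σ, R₀ > 0 such that ∫_R^∞ g(r)^{-1/3} dr ≥ R^{-σ/3} for all R ≥ R₀. If additionally Z : [R₀, ∞) → (0, ∞) is differentiable, nondecreasing, and satisfies Z(R)^{4/3} ≤ C·Z'(R)·η(R)^{1/3}·g(R)^{1/3} for a positive decreasing function η, then Z(R) ≤ 27·C³·η(R)·R^σ for all R ≥ R₀. -/
/-!
Write `K = C η(R)^{1/3}`. On `[R, ∞)` the function `η` is at most `η(R)`, so the differential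
inequality gives `g^{-1/3} ≤ K Z' Z^{-4/3} = (-3 K Z^{-1/3})'`. Integrating from `R` to `S` and
letting `S → ∞` yields `R^{-σ/3} ≤ ∫_R^∞ g^{-1/3} ≤ 3 K Z(R)^{-1/3}`, which is the claim after
cubing.
-/

open Set MeasureTheory

lemma inv_le_mul_inv_iff {x y A : ℝ} (hx : 0 < x) (hy : 0 < y) :
    x⁻¹ ≤ A * y⁻¹ ↔ y ≤ A * x := by
  rw [← div_eq_mul_inv, le_div_iff₀ hy, inv_mul_le_iff₀ hx, mul_comm]

lemma rpow_neg_le_mul_rpow_of_rpow_add_one_le {x z M p : ℝ} (hx : 0 < x) (hz : 0 < z)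
    (h : z ^ (p + 1) ≤ M * x ^ p) : x ^ (-p) ≤ M * z ^ (-p - 1) := by
  rw [show -p - 1 = -(p + 1) by ring, Real.rpow_neg hx.le, Real.rpow_neg hz.le,
    inv_le_mul_inv_iff (by positivity) (by positivity)]
  exact h

lemma rpow_neg_le_mul_rpow_of_rpow_add_one_le_mul {x z z' c e e' p : ℝ} (hx : 0 < x)
    (hz : 0 < z) (he : 0 < e) (hee' : e ≤ e') (hp : 0 ≤ p)
    (h : z ^ (p + 1) ≤ c * z' * e ^ p * x ^ p) : x ^ (-p) ≤ c * e' ^ p * z' * z ^ (-p - 1) := by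
  rw [mul_right_comm] at h
  have hcz' : 0 < c * z' * x ^ p :=
    pos_of_mul_pos_left ((by positivity : 0 < z ^ (p + 1)).trans_le h) (by positivity)
  refine rpow_neg_le_mul_rpow_of_rpow_add_one_le hx hz (h.trans ?_)
  calc c * z' * x ^ p * e ^ p ≤ c * z' * x ^ p * e' ^ p :=
        mul_le_mul_of_nonneg_left (Real.rpow_le_rpow he.le hee' hp) hcz'.le
    _ = c * e' ^ p * z' * x ^ p := by ring

lemma le_pow_three_mul_rpow_of_rpow_neg_le {z R A σ : ℝ} (hz : 0 < z) (hR : 0 < R)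
    (h : R ^ (-(σ / 3)) ≤ A * z ^ (-(1 / 3 : ℝ))) : z ≤ A ^ 3 * R ^ σ := by
  rw [Real.rpow_neg hR.le, Real.rpow_neg hz.le,
    inv_le_mul_inv_iff (by positivity) (by positivity)] at h
  calc z = (z ^ ((3 : ℕ) : ℝ)⁻¹) ^ 3 := (Real.rpow_inv_natCast_pow hz.le three_ne_zero).symm
    _ ≤ (A * R ^ (σ / 3)) ^ 3 := by gcongr; simpa using h
    _ = A ^ 3 * R ^ σ := by
      rw [mul_pow, ← Real.rpow_mul_natCast hR.le]
      norm_num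

/-- `-(K/p) Z^{-p}` is an antiderivative of `K Z' Z^{-p-1}`. -/
lemma intervalIntegral_le_of_le_mul_deriv_mul_rpow {φ Z : ℝ → ℝ} {a b K p : ℝ} (hab : a ≤ b)
    (hp : 0 < p) (hK : 0 ≤ K) (hZpos : ∀ x ∈ Icc a b, 0 < Z x)
    (hZdiff : ∀ x ∈ Icc a b, DifferentiableAt ℝ Z x) (hφ : IntegrableOn φ (Icc a b))
    (hφle : ∀ x ∈ Ioo a b, φ x ≤ K * deriv Z x * Z x ^ (-p - 1)) :
    ∫ x in a..b, φ x ≤ K / p * Z a ^ (-p) := by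
  have hG : ∀ x ∈ Icc a b, HasDerivAt (fun y => -(K / p) * Z y ^ (-p))
      (K * deriv Z x * Z x ^ (-p - 1)) x := fun x hx => by
    refine (((hZdiff x hx).hasDerivAt.rpow_const (Or.inl (hZpos x hx).ne')).const_mul
      (-(K / p))).congr_deriv ?_
    field_simp
  have hZb : 0 ≤ K / p * Z b ^ (-p) := by
    have := hZpos b (right_mem_Icc.2 hab)
    positivity
  calc ∫ x in a..b, φ x
      ≤ -(K / p) * Z b ^ (-p) - -(K / p) * Z a ^ (-p) :=
        intervalIntegral.integral_le_sub_of_hasDeriv_right_of_le hab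
          (fun x hx => (hG x hx).continuousAt.continuousWithinAt)
          (fun x hx => (hG x (Ioo_subset_Icc_self hx)).hasDerivWithinAt) hφ hφle
    _ ≤ K / p * Z a ^ (-p) := by linarith

lemma setIntegral_Ioi_le_of_forall_intervalIntegral_le {φ : ℝ → ℝ} {a M : ℝ} (hM : 0 ≤ M)
    (h : ∀ b, a ≤ b → ∫ x in a..b, φ x ≤ M) : ∫ x in Ioi a, φ x ≤ M := by
  by_cases hφ : IntegrableOn φ (Ioi a)
  · exact le_of_tendsto (intervalIntegral_tendsto_integral_Ioi a hφ Filter.tendsto_id)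
      (Filter.eventually_atTop.2 ⟨a, h⟩)
  · rwa [integral_undef hφ]

theorem combined_ode_lemma_general (g Z η : ℝ → ℝ) (C σ R₀ : ℝ)
    (hC : 0 < C) (hR₀ : 0 < R₀)
    (hgcont : ContinuousOn g (Set.Ioi 0))
    (hgpos : ∀ r, 0 < r → 0 < g r)
    (hint : ∀ R, R₀ ≤ R → R ^ (-σ / 3) ≤ ∫ r in Set.Ioi R, g r ^ (-(1 : ℝ) / 3))
    (hZpos : ∀ R, R₀ ≤ R → 0 < Z R)
    (hZdiff : ∀ R, R₀ ≤ R → DifferentiableAt ℝ Z R)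
    (hηpos : ∀ R, 0 < η R)
    (hηanti : AntitoneOn η (Set.Ici R₀))
    (hineq : ∀ R, R₀ ≤ R →
      Z R ^ ((4 : ℝ) / 3) ≤ C * deriv Z R * η R ^ ((1 : ℝ) / 3) * g R ^ ((1 : ℝ) / 3)) :
    ∀ R, R₀ ≤ R → Z R ≤ 27 * C ^ 3 * η R * R ^ σ := by
  simp only [neg_div] at hint
  intro R hR
  have hRpos : 0 < R := hR₀.trans_le hR
  set K := C * η R ^ ((1 : ℝ) / 3)
  have hK : 0 ≤ K := by have := hηpos R; positivity
  have hfinite : ∀ S, R ≤ S →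
      ∫ r in R..S, g r ^ (-((1 : ℝ) / 3)) ≤ K / (1 / 3) * Z R ^ (-((1 : ℝ) / 3)) :=
    fun S hS => intervalIntegral_le_of_le_mul_deriv_mul_rpow hS (by norm_num) hK
      (fun x hx => hZpos x (hR.trans hx.1)) (fun x hx => hZdiff x (hR.trans hx.1))
      (((hgcont.mono fun x hx => hRpos.trans_le hx.1).rpow_const
        fun x hx => Or.inl (hgpos x (hRpos.trans_le hx.1)).ne').integrableOn_Icc)
      fun x hx => by
        have hx₀ : R₀ ≤ x := hR.trans hx.1.le
        refine rpow_neg_le_mul_rpow_of_rpow_add_one_le_mul (hgpos x (hR₀.trans_le hx₀))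
          (hZpos x hx₀) (hηpos x) (hηanti hR hx₀ hx.1.le) (by norm_num) ?_
        rw [show (1 : ℝ) / 3 + 1 = 4 / 3 by norm_num]
        exact hineq x hx₀
  have hZR := hZpos R hR
  have hbound := (hint R hR).trans
    (setIntegral_Ioi_le_of_forall_intervalIntegral_le (by positivity) hfinite)
  calc Z R ≤ (K / (1 / 3)) ^ 3 * R ^ σ :=
        le_pow_three_mul_rpow_of_rpow_neg_le hZR hRpos hbound
    _ = 27 * C ^ 3 * η R * R ^ σ := by
      have hη3 : (η R ^ ((1 : ℝ) / 3)) ^ 3 = η R := by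
        rw [← Real.rpow_mul_natCast (hηpos R).le]
        norm_num
      rw [div_pow, mul_pow, hη3]
      ring

/-- Combined ODE lemma for the φ-F-symphonic Liouville argument: if
`∫_R^∞ g^{-1/3} ≥ R^{-σ/3}` and `Z^{4/3} ≤ C Z' η^{1/3} g^{1/3}` with `Z` positive,
nondecreasing and `η` positive decreasing, then `Z(R) ≤ 27 C³ η(R) R^σ`. -/
theorem combined_ode_lemma (g Z η : ℝ → ℝ) (C σ R₀ : ℝ)
    (hC : 0 < C) (hσ : 0 < σ) (hR₀ : 0 < R₀)
    (hgcont : ContinuousOn g (Set.Ioi 0))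
    (hgpos : ∀ r, 0 < r → 0 < g r)
    (hint : ∀ R, R₀ ≤ R → R ^ (-σ / 3) ≤ ∫ r in Set.Ioi R, g r ^ (-(1 : ℝ) / 3))
    (hZpos : ∀ R, R₀ ≤ R → 0 < Z R)
    (hZdiff : ∀ R, R₀ ≤ R → DifferentiableAt ℝ Z R)
    (hZmono : MonotoneOn Z (Set.Ici R₀))
    (hηpos : ∀ R, 0 < η R)
    (hηanti : AntitoneOn η (Set.Ici R₀))
    (hineq : ∀ R, R₀ ≤ R →
      Z R ^ ((4 : ℝ) / 3) ≤ C * deriv Z R * η R ^ ((1 : ℝ) / 3) * g R ^ ((1 : ℝ) / 3)) :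
    ∀ R, R₀ ≤ R → Z R ≤ 27 * C ^ 3 * η R * R ^ σ :=
  combined_ode_lemma_general g Z η C σ R₀ hC hR₀ hgcont hgpos hint hZpos hZdiff hηpos hηanti hineq
end
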